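/- Assume moreover S𝔞 = 0, i.e. ρ(X)(𝔞(α,β)) = 𝔞(S*_X α, β) + 𝔞(α, S*_X β) for all X ∈ 𝔄 and α, β ∈ 𝔄', where 𝔞(α,β) = (1/2)(r(α,β) − r(β,α)). Let T : 𝔄'×𝔄' → 𝔄' satisfy ⟨T_α β, X⟩ = ρ(X)(r(α,β)) − r(S*_X α, β) − r(α, S*_X β) + ⟨S*_{r_#(α)} β, X⟩ for all X, set T*_α X = r_#(S*_X α) + [r_#(α), X]_S, [α,β]_T = T_α β − T_β α, and Δ(r)(α,β) = r_#([α,β]_T) − [r_#(α), r_#(β)]_S. On 𝔄 ⊕ 𝔄' define the brackets [X+α, Y+β]^{▷,r} = [X,Y]_S + S*_X β − S*_Y α + Δ(r)(α,β) and [X+α, Y+β]^r = [X,Y]_S + [α,β]_T + T*_α Y − T*_β X + S*_X β − S*_Y α. Then the map ξ : 𝔄 ⊕ 𝔄' → 𝔄 ⊕ 𝔄', ξ(X+α) = (X − r_#(α)) + α, intertwines the two brackets: ξ([u,v]^{▷,r}) = [ξ(u), ξ(v)]^r for all u, v ∈ 𝔄 ⊕ 𝔄'. (Proposition 'pralg',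 Section 5.) -/
import Mathlib


/-!
Statement 14 (Proposition `pralg`, Section 5): the map
`ξ(X+α) = (X − r_#(α)) + α` intertwines the bracket `[·,·]^{▷,r}` with the
bracket `[·,·]^r` on `𝔄 ⊕ 𝔄'`.
-/

section

variable {R : Type*} [CommRing R] [Algebra ℝ R]
variable {A : Type*} [AddCommGroup A] [Module R A] [Module ℝ A] [IsScalarTower ℝ R A]
variable {A' : Type*} [AddCommGroup A'] [Module R A'] [Module ℝ A'] [IsScalarTower ℝ R A']

/-- The bilinear form `r(α,β) = ⟨β, r_#(α)⟩`. -/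
def rForm (pa : A' →ₗ[R] A →ₗ[R] R) (rsharp : A' →ₗ[R] A) (α β : A') : R :=
  pa β (rsharp α)

/-- The skew-symmetric part `𝔞(α,β) = (1/2)(r(α,β) − r(β,α))` of `r`. -/
noncomputable def aForm (pa : A' →ₗ[R] A →ₗ[R] R) (rsharp : A' →ₗ[R] A)
    (α β : A') : R :=
  ((2 : ℝ)⁻¹) • (rForm pa rsharp α β - rForm pa rsharp β α)

/-- `T*_α X = r_#(S*_X α) + [r_#(α), X]_S`. -/
def TstarR (S : A →ₗ[ℝ] A →ₗ[ℝ] A) (Sstar : A → A' → A') (rsharp : A' →ₗ[R] A)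
    (α : A') (X : A) : A :=
  rsharp (Sstar X α) + (S (rsharp α) X - S X (rsharp α))

/-- `Δ(r)(α,β) = r_#([α,β]_T) − [r_#(α), r_#(β)]_S`. -/
def DeltaR (S : A →ₗ[ℝ] A →ₗ[ℝ] A) (rsharp : A' →ₗ[R] A) (Tprod : A' → A' → A')
    (α β : A') : A :=
  rsharp (Tprod α β - Tprod β α)
    - (S (rsharp α) (rsharp β) - S (rsharp β) (rsharp α))

/-- The bracket `[X+α, Y+β]^{▷,r} = [X,Y]_S + S*_X β − S*_Y α + Δ(r)(α,β)`. -/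
def braTri (S : A →ₗ[ℝ] A →ₗ[ℝ] A) (Sstar : A → A' → A') (rsharp : A' →ₗ[R] A)
    (Tprod : A' → A' → A') (u v : A × A') : A × A' :=
  (S u.1 v.1 - S v.1 u.1 + DeltaR S rsharp Tprod u.2 v.2,
    Sstar u.1 v.2 - Sstar v.1 u.2)

/-- The bracket
`[X+α, Y+β]^r = [X,Y]_S + [α,β]_T + T*_α Y − T*_β X + S*_X β − S*_Y α`. -/
def braR (S : A →ₗ[ℝ] A →ₗ[ℝ] A) (Sstar : A → A' → A') (rsharp : A' →ₗ[R] A)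
    (Tprod : A' → A' → A') (u v : A × A') : A × A' :=
  (S u.1 v.1 - S v.1 u.1 + TstarR S Sstar rsharp u.2 v.1
      - TstarR S Sstar rsharp v.2 u.1,
    Tprod u.2 v.2 - Tprod v.2 u.2 + Sstar u.1 v.2 - Sstar v.1 u.2)

/-- `ξ(X+α) = (X − r_#(α)) + α`. -/
def xiMap (rsharp : A' →ₗ[R] A) (u : A × A') : A × A' :=
  (u.1 - rsharp u.2, u.2)

theorem stmt14
    (pa : A' →ₗ[R] A →ₗ[R] R)
    (hnd1 : ∀ α : A', (∀ X : A, pa α X = 0) → α = 0)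
    (hnd2 : ∀ X : A, (∀ α : A', pa α X = 0) → X = 0)
    (ρ : A →ₗ[R] Derivation ℝ R R)
    (S : A →ₗ[ℝ] A →ₗ[ℝ] A)
    (hS1 : ∀ (f : R) (X Y : A), S (f • X) Y = f • S X Y)
    (hS2 : ∀ (X : A) (f : R) (Y : A), S X (f • Y) = f • S X Y + ρ X f • Y)
    (hSflat : ∀ X Y Z : A, S X (S Y Z) - S Y (S X Z) = S (S X Y - S Y X) Z)
    (hρ : ∀ (X Y : A) (f : R),
      ρ (S X Y - S Y X) f = ρ X (ρ Y f) - ρ Y (ρ X f))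
    (Sstar : A → A' → A')
    (hSstar : ∀ (X : A) (α : A') (Y : A),
      pa (Sstar X α) Y = ρ X (pa α Y) - pa α (S X Y))
    (rsharp : A' →ₗ[R] A)
    (Tprod : A' → A' → A')
    (hT : ∀ (α β : A') (X : A),
      pa (Tprod α β) X
        = ρ X (rForm pa rsharp α β) - rForm pa rsharp (Sstar X α) β
          - rForm pa rsharp α (Sstar X β) + pa (Sstar (rsharp α) β) X)
    (hSa : ∀ (X : A) (α β : A'),
      ρ X (aForm pa rsharp α β)
        = aForm pa rsharp (Sstar X α) β + aForm pa rsharp α (Sstar X β)) :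
    ∀ u v : A × A',
      xiMap rsharp (braTri S Sstar rsharp Tprod u v)
        = braR S Sstar rsharp Tprod (xiMap rsharp u) (xiMap rsharp v) := by

  -- Sstar is subtractive in its first argument
  have hsub : ∀ (X X' : A) (α : A'),
      Sstar (X - X') α = Sstar X α - Sstar X' α := by
    intro X X' α
    have h0 : Sstar (X - X') α - (Sstar X α - Sstar X' α) = 0 := by
      apply hnd1
      intro Y
      simp only [map_sub, LinearMap.sub_apply, hSstar, map_sub,
        LinearMap.sub_apply, Derivation.sub_apply]
      ring
    exact sub_eq_zero.mp h0
  -- key identity : [α,β]_T = S*_{r_# α} β - S*_{r_# β} α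
  have key : ∀ α β : A',
      Tprod α β - Tprod β α = Sstar (rsharp α) β - Sstar (rsharp β) α := by
    intro α β
    have h0 : Tprod α β - Tprod β α
        - (Sstar (rsharp α) β - Sstar (rsharp β) α) = 0 := by
      apply hnd1
      intro X
      have ha := hSa X α β
      simp only [aForm] at ha
      rw [Derivation.map_smul] at ha
      have ha2 := congrArg (fun t : R => (2:ℝ) • t) ha
      simp only [smul_add, smul_smul] at ha2
      norm_num at ha2
      simp only [map_sub, LinearMap.sub_apply, hT, hSstar]
      linear_combination ha2
    exact sub_eq_zero.mp h0
  intro u v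
  have e1 : (xiMap rsharp (braTri S Sstar rsharp Tprod u v)).1
      = (braR S Sstar rsharp Tprod (xiMap rsharp u) (xiMap rsharp v)).1 := by
    simp only [xiMap, braTri, braR, DeltaR, TstarR, key, hsub, map_sub,
      LinearMap.sub_apply]
    abel
  have e2 : (xiMap rsharp (braTri S Sstar rsharp Tprod u v)).2
      = (braR S Sstar rsharp Tprod (xiMap rsharp u) (xiMap rsharp v)).2 := by
    simp only [xiMap, braTri, braR, hsub, key]
    abel
  exact Prod.ext e1 e2


end
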